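/- Let X ⊆ ℝ^N be a convex set, g : ℝ^N → ℝ^M, and G : ℝ^N → Matrix (Fin M) (Fin N) ℝ such that for every y ∈ X, g has Jacobian G(y) within X at y. Assume constants 0 < σ_min ≤ σ_max < ∞ and ω > 0 such that for all y, y' ∈ X: σ_min‖v‖ ≤ ‖G(y)·v‖ for all v, ‖G(y)‖ ≤ σ_max, and ‖G(y) − G(y')‖ ≤ ω‖y − y'‖. Let x⋆ ∈ X satisfy G(x⋆)ᵀ·g(x⋆) = 0, set ε_min = ‖g(x⋆)‖, and define d(x) = (G(x)ᵀG(x))⁻¹·G(x)ᵀ·g(x) for x ∈ X. Let the step-size α satisfy max{1 − 3σ_min/σ_max, 0} < α ≤ 1 and assume ω·ε_min < (σ_min²/(√2·α))·(3 − (1−α)·σ_max/σ_min). Set T₁ = α·ω/(2σ_min), T₂ = (1−α)·σ_max/σ_min + √2·α·ω·ε_min/σ_min², assume additionally T₂ < 1, and let κ satisfy 0 < κ < (1 − T₂)²/(4αT₁). Define ρ_min = ((1−T₂) − √((1−T₂)² − 4αT₁κ))/(2T₁) and ρ_max = ((1−T₂) + √((1−T₂)² − 4αT₁κ))/(2T₁).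 Let P : ℝ^N → ℝ^N be nonexpansive with P(x⋆) = x⋆ and P(u) ∈ X for all u. Let (x^k)_{k≥0} be a sequence in X with ‖x⁰ − x⋆‖ < ρ_max and x^{k+1} = P(x^k − α·d̃^k), where (d̃^k) is any sequence of vectors with ‖d̃^k − d(x^k)‖ ≤ κ for all k. Then limsup_{k→∞} ‖x^k − x⋆‖ ≤ ρ_min. -/

import Mathlib

open Matrix

/-- Operator (spectral) 2-norm of a real matrix. -/
noncomputable def matOpNorm {m n : ℕ} (A : Matrix (Fin m) (Fin n) ℝ) : ℝ :=
  ‖LinearMap.toContinuousLinearMap (Matrix.toEuclideanLin A)‖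

/-- Matrix-vector product as a map between Euclidean spaces. -/
noncomputable def matVec {m n : ℕ} (A : Matrix (Fin m) (Fin n) ℝ)
    (v : EuclideanSpace ℝ (Fin n)) : EuclideanSpace ℝ (Fin m) :=
  Matrix.toEuclideanLin A v

/-!
Write `e = y - x⋆` and `A = G(y)`. Since `(AᵀA)⁻¹Aᵀ A = 1`, the exact Gauss–Newton step satisfies
`e - d(y) = (AᵀA)⁻¹Aᵀ τ - (AᵀA)⁻¹ (A - G(x⋆))ᵀ g(x⋆)`, where `τ` is the first-order Taylor
remainder of `g` at `y` and `G(x⋆)` could be subtracted because `G(x⋆)ᵀ g(x⋆) = 0`. Lipschitz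
continuity of `G` bounds the two terms by `ω‖e‖²/(2σ)` and `ω ε ‖e‖/σ²`. Together with the
nonexpansiveness of `P` and the perturbation bound, the errors `r_k = ‖x^k - x⋆‖` obey
`r_{k+1} ≤ F(r_k) = T₁ r_k² + T₂ r_k + ακ`, and `ρ_min < ρ_max` are the fixed points of `F`.
On `[ρ_min, R]` with `R < ρ_max` we have `F(r) - ρ_min ≤ θ (r - ρ_min)` for some `θ < 1`, so
`max (r_k, ρ_min)` tends to `ρ_min` geometrically.
-/

open Set Filter Topology

section MatVec

variable {m n p : ℕ}

lemma norm_matVec_le (A : Matrix (Fin m) (Fin n) ℝ) (v : EuclideanSpace ℝ (Fin n)) :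
    ‖matVec A v‖ ≤ matOpNorm A * ‖v‖ :=
  (LinearMap.toContinuousLinearMap (toEuclideanLin A)).le_opNorm v

lemma matVec_mul (A : Matrix (Fin m) (Fin n) ℝ) (B : Matrix (Fin n) (Fin p) ℝ)
    (v : EuclideanSpace ℝ (Fin p)) : matVec (A * B) v = matVec A (matVec B v) := by
  simp [matVec, toLpLin_apply, mulVec_mulVec]

lemma matVec_one (v : EuclideanSpace ℝ (Fin n)) : matVec (1 : Matrix (Fin n) (Fin n) ℝ) v = v := by
  simp [matVec]

lemma sub_matVec (A B : Matrix (Fin m) (Fin n) ℝ) (v : EuclideanSpace ℝ (Fin n)) :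
    matVec (A - B) v = matVec A v - matVec B v := by
  simp [matVec, map_sub]

lemma matVec_sub (A : Matrix (Fin m) (Fin n) ℝ) (u v : EuclideanSpace ℝ (Fin n)) :
    matVec A (u - v) = matVec A u - matVec A v :=
  map_sub _ u v

lemma inner_matVec_transpose (A : Matrix (Fin m) (Fin n) ℝ) (u : EuclideanSpace ℝ (Fin m))
    (v : EuclideanSpace ℝ (Fin n)) : inner ℝ (matVec Aᵀ u) v = inner ℝ u (matVec A v) := by
  rw [matVec, matVec, ← conjTranspose_eq_transpose_of_trivial,
    toEuclideanLin_conjTranspose_eq_adjoint]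
  exact LinearMap.adjoint_inner_left _ _ _

lemma inner_matVec_transpose_mul_self (A : Matrix (Fin m) (Fin n) ℝ)
    (v : EuclideanSpace ℝ (Fin n)) : inner ℝ v (matVec (Aᵀ * A) v) = ‖matVec A v‖ ^ 2 := by
  rw [matVec_mul, real_inner_comm, inner_matVec_transpose, real_inner_self_eq_norm_sq]

lemma norm_matVec_transpose_le (A : Matrix (Fin m) (Fin n) ℝ) (u : EuclideanSpace ℝ (Fin m)) :
    ‖matVec Aᵀ u‖ ≤ matOpNorm A * ‖u‖ := by
  have h : ‖matVec Aᵀ u‖ * ‖matVec Aᵀ u‖ ≤ ‖matVec Aᵀ u‖ * (matOpNorm A * ‖u‖) :=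
    calc ‖matVec Aᵀ u‖ * ‖matVec Aᵀ u‖ = inner ℝ u (matVec A (matVec Aᵀ u)) := by
          rw [← inner_matVec_transpose, real_inner_self_eq_norm_mul_norm]
      _ ≤ ‖u‖ * ‖matVec A (matVec Aᵀ u)‖ := real_inner_le_norm _ _
      _ ≤ ‖u‖ * (matOpNorm A * ‖matVec Aᵀ u‖) := by gcongr; exact norm_matVec_le _ _
      _ = ‖matVec Aᵀ u‖ * (matOpNorm A * ‖u‖) := by ring
  have hA : 0 ≤ matOpNorm A := norm_nonneg _
  nlinarith [norm_nonneg (matVec Aᵀ u), mul_nonneg hA (norm_nonneg u)]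

end MatVec

section LowerBound

variable {m n : ℕ} {A : Matrix (Fin m) (Fin n) ℝ} {σ : ℝ}

lemma isUnit_det_transpose_mul_self (hσ : 0 < σ) (hA : ∀ v, σ * ‖v‖ ≤ ‖matVec A v‖) :
    IsUnit (Aᵀ * A).det := by
  rw [isUnit_iff_ne_zero]
  intro hdet
  obtain ⟨v, hv0, hv⟩ := exists_mulVec_eq_zero_iff.2 hdet
  have hAv : ‖matVec A (WithLp.toLp 2 v)‖ = 0 := by
    have h : matVec (Aᵀ * A) (WithLp.toLp 2 v) = 0 := by simp [matVec, hv]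
    rw [← sq_eq_zero_iff, ← inner_matVec_transpose_mul_self, h, inner_zero_right]
  have hv : ‖WithLp.toLp 2 v‖ = 0 := by
    nlinarith [hA (WithLp.toLp 2 v), norm_nonneg (WithLp.toLp 2 v)]
  exact hv0 (by simpa using hv)

lemma matVec_pinv_matVec (hσ : 0 < σ) (hA : ∀ v, σ * ‖v‖ ≤ ‖matVec A v‖)
    (v : EuclideanSpace ℝ (Fin n)) : matVec ((Aᵀ * A)⁻¹ * Aᵀ) (matVec A v) = v := by
  rw [← matVec_mul, Matrix.mul_assoc, nonsing_inv_mul _ (isUnit_det_transpose_mul_self hσ hA),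
    matVec_one]

lemma norm_matVec_inv_transpose_mul_self_le (hσ : 0 < σ) (hA : ∀ v, σ * ‖v‖ ≤ ‖matVec A v‖)
    (u : EuclideanSpace ℝ (Fin n)) : ‖matVec (Aᵀ * A)⁻¹ u‖ ≤ ‖u‖ / σ ^ 2 := by
  set w := matVec (Aᵀ * A)⁻¹ u
  have hw : matVec (Aᵀ * A) w = u := by
    rw [← matVec_mul, mul_nonsing_inv _ (isUnit_det_transpose_mul_self hσ hA), matVec_one]
  have h : ‖w‖ * (σ ^ 2 * ‖w‖) ≤ ‖w‖ * ‖u‖ :=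
    calc ‖w‖ * (σ ^ 2 * ‖w‖) = (σ * ‖w‖) ^ 2 := by ring
      _ ≤ ‖matVec A w‖ ^ 2 := by gcongr; exact hA w
      _ = inner ℝ w u := by rw [← inner_matVec_transpose_mul_self, hw]
      _ ≤ ‖w‖ * ‖u‖ := real_inner_le_norm _ _
  rw [le_div_iff₀ (by positivity), mul_comm]
  nlinarith [norm_nonneg w, norm_nonneg u, pow_pos hσ 2]

lemma norm_matVec_pinv_le (hσ : 0 < σ) (hA : ∀ v, σ * ‖v‖ ≤ ‖matVec A v‖)
    (u : EuclideanSpace ℝ (Fin m)) : ‖matVec ((Aᵀ * A)⁻¹ * Aᵀ) u‖ ≤ ‖u‖ / σ := by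
  set w := matVec ((Aᵀ * A)⁻¹ * Aᵀ) u
  have hw : matVec (Aᵀ * A) w = matVec Aᵀ u := by
    rw [← matVec_mul, ← Matrix.mul_assoc,
      mul_nonsing_inv _ (isUnit_det_transpose_mul_self hσ hA), Matrix.one_mul]
  -- `A w` is the orthogonal projection of `u` onto the range of `A`
  have h : ‖matVec A w‖ * ‖matVec A w‖ ≤ ‖matVec A w‖ * ‖u‖ :=
    calc ‖matVec A w‖ * ‖matVec A w‖ = inner ℝ w (matVec (Aᵀ * A) w) := by
          rw [inner_matVec_transpose_mul_self, sq]
      _ = inner ℝ (matVec A w) u := by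
          rw [hw, real_inner_comm, inner_matVec_transpose, real_inner_comm]
      _ ≤ ‖matVec A w‖ * ‖u‖ := real_inner_le_norm _ _
  have hAw : ‖matVec A w‖ ≤ ‖u‖ := by nlinarith [norm_nonneg (matVec A w), norm_nonneg u]
  rw [le_div_iff₀ hσ, mul_comm]
  exact (hA w).trans hAw

end LowerBound

theorem Convex.norm_image_sub_sub_fderiv_le {E F : Type*} [NormedAddCommGroup E]
    [NormedSpace ℝ E] [NormedAddCommGroup F] [NormedSpace ℝ F] {s : Set E} (hs : Convex ℝ s)
    {f : E → F} {f' : E → E →L[ℝ] F} (hf : ∀ x ∈ s, HasFDerivWithinAt f (f' x) s x) {ω : ℝ}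
    (hf' : ∀ x ∈ s, ∀ y ∈ s, ‖f' x - f' y‖ ≤ ω * ‖x - y‖) {x y : E} (hx : x ∈ s) (hy : y ∈ s) :
    ‖f y - f x - f' x (y - x)‖ ≤ ω / 2 * ‖y - x‖ ^ 2 := by
  set e := y - x
  set γ : ℝ → E := fun t => x + t • e
  have hγ : MapsTo γ (Icc 0 1) s := fun t ht => hs.add_smul_sub_mem hx hy ht
  set φ : ℝ → F := fun t => f (γ t) - f x - t • f' x e
  have hφ : ∀ t ∈ Icc (0 : ℝ) 1, HasDerivWithinAt φ ((f' (γ t) - f' x) e) (Icc 0 1) t := by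
    intro t ht
    have hγ' : HasDerivWithinAt γ e (Icc 0 1) t := by
      have := ((hasDerivAt_id t).smul_const e).const_add x
      rw [one_smul] at this
      exact this.hasDerivWithinAt
    have hlin : HasDerivWithinAt (fun t : ℝ => t • f' x e) (f' x e) (Icc 0 1) t := by
      simpa using ((hasDerivAt_id t).smul_const (f' x e)).hasDerivWithinAt
    rw [_root_.sub_apply]
    exact (((hf _ (hγ ht)).comp_hasDerivWithinAt t hγ' hγ).sub_const (f x)).sub hlin
  have hB : ∀ t, HasDerivAt (fun t => ω / 2 * ‖e‖ ^ 2 * t ^ 2) (ω * ‖e‖ ^ 2 * t) t := by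
    intro t
    refine ((hasDerivAt_pow 2 t).const_mul (ω / 2 * ‖e‖ ^ 2)).congr_deriv ?_
    push_cast
    ring
  have hbound : ∀ t ∈ Ico (0 : ℝ) 1, ‖(f' (γ t) - f' x) e‖ ≤ ω * ‖e‖ ^ 2 * t := by
    intro t ht
    calc ‖(f' (γ t) - f' x) e‖ ≤ ‖f' (γ t) - f' x‖ * ‖e‖ := (f' (γ t) - f' x).le_opNorm e
      _ ≤ ω * ‖γ t - x‖ * ‖e‖ := by gcongr; exact hf' _ (hγ (Ico_subset_Icc_self ht)) _ hx
      _ = ω * ‖e‖ ^ 2 * t := by simp [γ, norm_smul, abs_of_nonneg ht.1]; ring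
  have hφ1 : ‖φ 1‖ ≤ ω / 2 * ‖e‖ ^ 2 * 1 ^ 2 :=
    image_norm_le_of_norm_deriv_right_le_deriv_boundary
      (fun t ht => (hφ t ht).continuousWithinAt)
      (fun t ht => (hφ t (Ico_subset_Icc_self ht)).mono_of_mem_nhdsWithin
        (Icc_mem_nhdsGE_of_mem ht))
      (by simp [φ, γ]) hB hbound (right_mem_Icc.2 zero_le_one)
  simpa [φ, γ, e] using hφ1

section DampedStep

variable {E : Type*} [SeminormedAddCommGroup E] [NormedSpace ℝ E]

lemma norm_sub_smul_le (e d : E) {α : ℝ} (h0 : 0 ≤ α) (h1 : α ≤ 1) :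
    ‖e - α • d‖ ≤ (1 - α) * ‖e‖ + α * ‖e - d‖ :=
  calc ‖e - α • d‖ = ‖(1 - α) • e + α • (e - d)‖ := by congr 1; module
    _ ≤ ‖(1 - α) • e‖ + ‖α • (e - d)‖ := norm_add_le _ _
    _ = (1 - α) * ‖e‖ + α * ‖e - d‖ := by
        rw [norm_smul, norm_smul, Real.norm_of_nonneg (by linarith), Real.norm_of_nonneg h0]

lemma norm_sub_smul_sub_le (u v w z : E) {α : ℝ} (hα : 0 ≤ α) :
    ‖u - α • v - z‖ ≤ ‖u - α • w - z‖ + α * ‖v - w‖ :=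
  calc ‖u - α • v - z‖ ≤ ‖u - α • w - z‖ + ‖α • (w - v)‖ :=
        (norm_le_norm_add_norm_sub' _ _).trans_eq (by congr 2; module)
    _ = ‖u - α • w - z‖ + α * ‖v - w‖ := by
        rw [norm_smul, Real.norm_of_nonneg hα, norm_sub_rev w v]

end DampedStep

section GaussNewton

variable {N M : ℕ} {X : Set (EuclideanSpace ℝ (Fin N))}
  {g : EuclideanSpace ℝ (Fin N) → EuclideanSpace ℝ (Fin M)}
  {G : EuclideanSpace ℝ (Fin N) → Matrix (Fin M) (Fin N) ℝ} {σ ω : ℝ}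
  {xstar y : EuclideanSpace ℝ (Fin N)}

lemma norm_sub_sub_gaussNewton_le (hX : Convex ℝ X)
    (hderiv : ∀ y ∈ X, HasFDerivWithinAt g
      (LinearMap.toContinuousLinearMap (Matrix.toEuclideanLin (G y))) X y)
    (hLip : ∀ y ∈ X, ∀ y' ∈ X, matOpNorm (G y - G y') ≤ ω * ‖y - y'‖)
    (hxstar : xstar ∈ X) (hfix : matVec (G xstar)ᵀ (g xstar) = 0) (hy : y ∈ X)
    (hσ : 0 < σ) (hlow : ∀ v, σ * ‖v‖ ≤ ‖matVec (G y) v‖) :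
    ‖(y - xstar) - matVec (((G y)ᵀ * G y)⁻¹ * (G y)ᵀ) (g y)‖ ≤
      ω / (2 * σ) * ‖y - xstar‖ ^ 2 + ω * ‖g xstar‖ / σ ^ 2 * ‖y - xstar‖ := by
  set A := G y
  set τ := g xstar - g y - matVec A (xstar - y)
  have hτ : ‖τ‖ ≤ ω / 2 * ‖y - xstar‖ ^ 2 := by
    rw [← norm_neg (y - xstar), neg_sub]
    refine hX.norm_image_sub_sub_fderiv_le hderiv (fun y hy y' hy' => ?_) hy hxstar
    simpa [matOpNorm, map_sub] using hLip y hy y' hy'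
  have hres : matVec Aᵀ (g xstar) = matVec (A - G xstar)ᵀ (g xstar) := by
    rw [transpose_sub, sub_matVec, hfix, sub_zero]
  have hsplit : (y - xstar) - matVec ((Aᵀ * A)⁻¹ * Aᵀ) (g y) =
      matVec ((Aᵀ * A)⁻¹ * Aᵀ) τ - matVec (Aᵀ * A)⁻¹ (matVec (A - G xstar)ᵀ (g xstar)) := by
    rw [← hres, ← matVec_mul (Aᵀ * A)⁻¹ Aᵀ]
    conv_lhs => rw [← matVec_pinv_matVec hσ hlow (y - xstar)]
    rw [← matVec_sub, ← matVec_sub]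
    congr 1
    simp only [τ, matVec_sub]
    abel
  calc ‖(y - xstar) - matVec ((Aᵀ * A)⁻¹ * Aᵀ) (g y)‖
      ≤ ‖matVec ((Aᵀ * A)⁻¹ * Aᵀ) τ‖ +
          ‖matVec (Aᵀ * A)⁻¹ (matVec (A - G xstar)ᵀ (g xstar))‖ := by
        rw [hsplit]; exact norm_sub_le _ _
    _ ≤ ‖τ‖ / σ + ‖matVec (A - G xstar)ᵀ (g xstar)‖ / σ ^ 2 := by
        gcongr
        · exact norm_matVec_pinv_le hσ hlow τ
        · exact norm_matVec_inv_transpose_mul_self_le hσ hlow _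
    _ ≤ ω / 2 * ‖y - xstar‖ ^ 2 / σ + ω * ‖y - xstar‖ * ‖g xstar‖ / σ ^ 2 := by
        gcongr
        exact (norm_matVec_transpose_le _ _).trans
          (mul_le_mul_of_nonneg_right (hLip y hy xstar hxstar) (norm_nonneg _))
    _ = ω / (2 * σ) * ‖y - xstar‖ ^ 2 + ω * ‖g xstar‖ / σ ^ 2 * ‖y - xstar‖ := by ring

lemma norm_sub_smul_gaussNewton_sub_le (hX : Convex ℝ X)
    (hderiv : ∀ y ∈ X, HasFDerivWithinAt g
      (LinearMap.toContinuousLinearMap (Matrix.toEuclideanLin (G y))) X y)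
    (hLip : ∀ y ∈ X, ∀ y' ∈ X, matOpNorm (G y - G y') ≤ ω * ‖y - y'‖)
    (hxstar : xstar ∈ X) (hfix : matVec (G xstar)ᵀ (g xstar) = 0) (hy : y ∈ X)
    (hσ : 0 < σ) (hlow : ∀ v, σ * ‖v‖ ≤ ‖matVec (G y) v‖) {α : ℝ} (hα0 : 0 ≤ α) (hα1 : α ≤ 1) :
    ‖y - α • matVec (((G y)ᵀ * G y)⁻¹ * (G y)ᵀ) (g y) - xstar‖ ≤
      α * ω / (2 * σ) * ‖y - xstar‖ ^ 2 +
        ((1 - α) + α * (ω * ‖g xstar‖ / σ ^ 2)) * ‖y - xstar‖ := by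
  rw [sub_right_comm]
  refine (norm_sub_smul_le _ _ hα0 hα1).trans ?_
  grw [norm_sub_sub_gaussNewton_le hX hderiv hLip hxstar hfix hy hσ hlow]
  exact le_of_eq (by ring)

end GaussNewton

section QuadraticRecursion

variable {a b c ρ₁ ρ₂ : ℝ}

lemma quadratic_eq_mul_sub_mul_sub {p : ℝ} (ha : a ≠ 0) (hD : 0 ≤ p ^ 2 - 4 * a * c) (r : ℝ) :
    a * r ^ 2 - p * r + c =
      a * (r - (p - √(p ^ 2 - 4 * a * c)) / (2 * a)) *
        (r - (p + √(p ^ 2 - 4 * a * c)) / (2 * a)) := by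
  have hs := Real.sq_sqrt hD
  set s := √(p ^ 2 - 4 * a * c)
  field_simp
  linear_combination hs

lemma quadratic_sub_le_mul_sub (ha : 0 < a) (hb : 0 ≤ b)
    (hfactor : ∀ r, a * r ^ 2 + b * r + c - r = a * (r - ρ₁) * (r - ρ₂))
    {s m R : ℝ} (hs : 0 ≤ s) (hsm : s ≤ m) (hm : ρ₁ ≤ m) (hmR : m ≤ R) :
    a * s ^ 2 + b * s + c - ρ₁ ≤ (1 - a * (ρ₂ - R)) * (m - ρ₁) := by
  have hmono : a * s ^ 2 + b * s ≤ a * m ^ 2 + b * m := by gcongr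
  nlinarith [hfactor m, mul_le_mul_of_nonneg_left hmR (mul_nonneg ha.le (sub_nonneg.2 hm))]

lemma limsup_le_of_le_quadratic_of_roots (ha : 0 < a) (hb : 0 ≤ b) (hc : 0 ≤ c) (hρ : ρ₁ < ρ₂)
    (hfactor : ∀ r, a * r ^ 2 + b * r + c - r = a * (r - ρ₁) * (r - ρ₂))
    {r : ℕ → ℝ} (hr : ∀ k, 0 ≤ r k) (hr0 : r 0 < ρ₂)
    (hstep : ∀ k, r (k + 1) ≤ a * r k ^ 2 + b * r k + c) :
    limsup r atTop ≤ ρ₁ := by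
  set R := max (r 0) ρ₁
  set θ := 1 - a * (ρ₂ - R)
  have hprod : a * ρ₁ * ρ₂ = c := by linear_combination -(hfactor 0)
  have hsum : a * (ρ₁ + ρ₂) = 1 - b := by linear_combination hfactor 1 - hfactor 0
  have hρ₁ : 0 ≤ ρ₁ := by nlinarith [mul_pos ha ((hr 0).trans_lt hr0)]
  have hRρ : R < ρ₂ := max_lt hr0 hρ
  have hθ0 : 0 ≤ θ := by nlinarith [le_max_right (r 0) ρ₁]
  have hθ1 : θ < 1 := by nlinarith
  have hgeom : ∀ k, max (r k) ρ₁ - ρ₁ ≤ θ ^ k * (R - ρ₁) := by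
    intro k
    induction k with
    | zero => simp [R]
    | succ k ih =>
      have hmR : max (r k) ρ₁ ≤ R := by
        nlinarith [pow_le_one₀ hθ0 hθ1.le (n := k), le_max_right (r 0) ρ₁]
      have hnext := quadratic_sub_le_mul_sub ha hb hfactor (hr k) (le_max_left _ _)
        (le_max_right _ _) hmR
      rw [← max_sub_sub_right, sub_self, pow_succ']
      refine max_le ?_ (by have := le_max_right (r 0) ρ₁; positivity)
      calc r (k + 1) - ρ₁ ≤ θ * (max (r k) ρ₁ - ρ₁) := by linarith [hstep k]
        _ ≤ θ * (θ ^ k * (R - ρ₁)) := by gcongr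
        _ = θ * θ ^ k * (R - ρ₁) := by ring
  have hlim : Tendsto (fun k => ρ₁ + θ ^ k * (R - ρ₁)) atTop (𝓝 ρ₁) := by
    simpa using tendsto_const_nhds.add
      ((tendsto_pow_atTop_nhds_zero_of_lt_one hθ0 hθ1).mul_const (R - ρ₁))
  refine hlim.limsup_eq ▸ limsup_le_limsup (Eventually.of_forall fun k => ?_)
    (isCoboundedUnder_le_of_le atTop hr) hlim.isBoundedUnder_le
  linarith [hgeom k, le_max_left (r k) ρ₁]

theorem limsup_le_of_le_quadratic (ha : 0 < a) (hb : 0 ≤ b) (hc : 0 ≤ c)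
    (hD : 4 * a * c < (1 - b) ^ 2) {r : ℕ → ℝ} (hr : ∀ k, 0 ≤ r k)
    (hr0 : r 0 < ((1 - b) + √((1 - b) ^ 2 - 4 * a * c)) / (2 * a))
    (hstep : ∀ k, r (k + 1) ≤ a * r k ^ 2 + b * r k + c) :
    limsup r atTop ≤ ((1 - b) - √((1 - b) ^ 2 - 4 * a * c)) / (2 * a) := by
  refine limsup_le_of_le_quadratic_of_roots ha hb hc ?_ (fun r => ?_) hr hr0 hstep
  · gcongr
    linarith [Real.sqrt_pos.2 (sub_pos.2 hD)]
  · rw [← quadratic_eq_mul_sub_mul_sub ha.ne' (by linarith)]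
    ring

end QuadraticRecursion

theorem gauss_newton_bounded_perturbation_convergence_general {N M : ℕ}
    (X : Set (EuclideanSpace ℝ (Fin N))) (hX : Convex ℝ X)
    (g : EuclideanSpace ℝ (Fin N) → EuclideanSpace ℝ (Fin M))
    (G : EuclideanSpace ℝ (Fin N) → Matrix (Fin M) (Fin N) ℝ)
    (hderiv : ∀ y ∈ X, HasFDerivWithinAt g
      (LinearMap.toContinuousLinearMap (Matrix.toEuclideanLin (G y))) X y)
    (σmin σmax ω : ℝ) (hσ0 : 0 < σmin) (hσσ : σmin ≤ σmax) (hω : 0 < ω)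
    (hlow : ∀ y ∈ X, ∀ v : EuclideanSpace ℝ (Fin N),
      σmin * ‖v‖ ≤ ‖matVec (G y) v‖)
    (hLip : ∀ y ∈ X, ∀ y' ∈ X, matOpNorm (G y - G y') ≤ ω * ‖y - y'‖)
    (xstar : EuclideanSpace ℝ (Fin N)) (hxstar : xstar ∈ X)
    (hfix : matVec (G xstar)ᵀ (g xstar) = 0)
    (εmin : ℝ) (hεmin : εmin = ‖g xstar‖)
    (d : EuclideanSpace ℝ (Fin N) → EuclideanSpace ℝ (Fin N))
    (hd : ∀ x, d x = matVec (((G x)ᵀ * G x)⁻¹ * (G x)ᵀ) (g x))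
    (α : ℝ) (hα1 : α ≤ 1) (hα0 : max (1 - 3 * σmin / σmax) 0 < α)
    (T₁ T₂ : ℝ)
    (hT₁ : T₁ = α * ω / (2 * σmin))
    (hT₂ : T₂ = (1 - α) * σmax / σmin + Real.sqrt 2 * α * ω * εmin / σmin ^ 2)
    (κ : ℝ) (hκ0 : 0 < κ) (hκ : κ < (1 - T₂) ^ 2 / (4 * α * T₁))
    (ρmin ρmax : ℝ)
    (hρmin : ρmin =
      ((1 - T₂) - Real.sqrt ((1 - T₂) ^ 2 - 4 * α * T₁ * κ)) / (2 * T₁))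
    (hρmax : ρmax =
      ((1 - T₂) + Real.sqrt ((1 - T₂) ^ 2 - 4 * α * T₁ * κ)) / (2 * T₁))
    (P : EuclideanSpace ℝ (Fin N) → EuclideanSpace ℝ (Fin N))
    (hPne : ∀ u v, ‖P u - P v‖ ≤ ‖u - v‖)
    (hPfix : P xstar = xstar)
    (x : ℕ → EuclideanSpace ℝ (Fin N))
    (hxX : ∀ k, x k ∈ X)
    (h0 : ‖x 0 - xstar‖ < ρmax)
    (dtil : ℕ → EuclideanSpace ℝ (Fin N))
    (hrec : ∀ k, x (k + 1) = P (x k - α • dtil k))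
    (hdtil : ∀ k, ‖dtil k - d (x k)‖ ≤ κ) :
    Filter.limsup (fun k => ‖x k - xstar‖) Filter.atTop ≤ ρmin := by
  subst hεmin
  have hα : 0 < α := (le_max_right _ _).trans_lt hα0
  have hT₁0 : 0 < T₁ := by rw [hT₁]; positivity
  have hT₂le : (1 - α) + α * (ω * ‖g xstar‖ / σmin ^ 2) ≤ T₂ :=
    calc (1 - α) + α * (ω * ‖g xstar‖ / σmin ^ 2)
        ≤ (1 - α) * (σmax / σmin) + √2 * (α * (ω * ‖g xstar‖ / σmin ^ 2)) := by
          gcongr ?_ + ?_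
          · exact le_mul_of_one_le_right (by linarith) ((one_le_div hσ0).2 hσσ)
          · exact le_mul_of_one_le_left (by positivity) Real.one_lt_sqrt_two.le
      _ = T₂ := by rw [hT₂]; ring
  have hT₂0 : 0 ≤ T₂ := by
    have : 0 ≤ α * (ω * ‖g xstar‖ / σmin ^ 2) := by positivity
    linarith
  have hstep : ∀ k, ‖x (k + 1) - xstar‖ ≤
      T₁ * ‖x k - xstar‖ ^ 2 + T₂ * ‖x k - xstar‖ + α * κ := fun k =>
    calc ‖x (k + 1) - xstar‖ ≤ ‖x k - α • dtil k - xstar‖ := by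
          simpa only [hrec, hPfix] using hPne (x k - α • dtil k) xstar
      _ ≤ ‖x k - α • d (x k) - xstar‖ + α * κ := by
          grw [norm_sub_smul_sub_le _ _ (d (x k)) _ hα.le, hdtil k]
      _ ≤ T₁ * ‖x k - xstar‖ ^ 2 + T₂ * ‖x k - xstar‖ + α * κ := by
          grw [hd, norm_sub_smul_gaussNewton_sub_le hX hderiv hLip hxstar hfix (hxX k) hσ0
            (hlow _ (hxX k)) hα.le hα1, hT₁, hT₂le]
  have hD : 4 * T₁ * (α * κ) < (1 - T₂) ^ 2 := by
    rw [lt_div_iff₀ (by positivity)] at hκ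
    linarith
  rw [show 4 * α * T₁ * κ = 4 * T₁ * (α * κ) by ring] at hρmin hρmax
  subst hρmin hρmax
  exact limsup_le_of_le_quadratic hT₁0 hT₂0 (by positivity) hD (fun k => norm_nonneg _) h0 hstep

/-- Theorem 1 of the paper: convergence of the perturbed
projected Gauss–Newton recursion with bounded perturbation κ to a
ρ_min-neighborhood of the fixed point, for initializations in the
ρ_max-neighborhood. -/
theorem gauss_newton_bounded_perturbation_convergence {N M : ℕ}
    (X : Set (EuclideanSpace ℝ (Fin N))) (hX : Convex ℝ X)
    (g : EuclideanSpace ℝ (Fin N) → EuclideanSpace ℝ (Fin M))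
    (G : EuclideanSpace ℝ (Fin N) → Matrix (Fin M) (Fin N) ℝ)
    (hderiv : ∀ y ∈ X, HasFDerivWithinAt g
      (LinearMap.toContinuousLinearMap (Matrix.toEuclideanLin (G y))) X y)
    (σmin σmax ω : ℝ) (hσ0 : 0 < σmin) (hσσ : σmin ≤ σmax) (hω : 0 < ω)
    (hlow : ∀ y ∈ X, ∀ v : EuclideanSpace ℝ (Fin N),
      σmin * ‖v‖ ≤ ‖matVec (G y) v‖)
    (hup : ∀ y ∈ X, matOpNorm (G y) ≤ σmax)
    (hLip : ∀ y ∈ X, ∀ y' ∈ X, matOpNorm (G y - G y') ≤ ω * ‖y - y'‖)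
    (xstar : EuclideanSpace ℝ (Fin N)) (hxstar : xstar ∈ X)
    (hfix : matVec (G xstar)ᵀ (g xstar) = 0)
    (εmin : ℝ) (hεmin : εmin = ‖g xstar‖)
    (d : EuclideanSpace ℝ (Fin N) → EuclideanSpace ℝ (Fin N))
    (hd : ∀ x, d x = matVec (((G x)ᵀ * G x)⁻¹ * (G x)ᵀ) (g x))
    (α : ℝ) (hα1 : α ≤ 1) (hα0 : max (1 - 3 * σmin / σmax) 0 < α)
    (hωε : ω * εmin < σmin ^ 2 / (Real.sqrt 2 * α) *
      (3 - (1 - α) * σmax / σmin))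
    (T₁ T₂ : ℝ)
    (hT₁ : T₁ = α * ω / (2 * σmin))
    (hT₂ : T₂ = (1 - α) * σmax / σmin + Real.sqrt 2 * α * ω * εmin / σmin ^ 2)
    (hT₂1 : T₂ < 1)
    (κ : ℝ) (hκ0 : 0 < κ) (hκ : κ < (1 - T₂) ^ 2 / (4 * α * T₁))
    (ρmin ρmax : ℝ)
    (hρmin : ρmin =
      ((1 - T₂) - Real.sqrt ((1 - T₂) ^ 2 - 4 * α * T₁ * κ)) / (2 * T₁))
    (hρmax : ρmax =
      ((1 - T₂) + Real.sqrt ((1 - T₂) ^ 2 - 4 * α * T₁ * κ)) / (2 * T₁))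
    (P : EuclideanSpace ℝ (Fin N) → EuclideanSpace ℝ (Fin N))
    (hPne : ∀ u v, ‖P u - P v‖ ≤ ‖u - v‖)
    (hPfix : P xstar = xstar)
    (hPX : ∀ u, P u ∈ X)
    (x : ℕ → EuclideanSpace ℝ (Fin N))
    (hxX : ∀ k, x k ∈ X)
    (h0 : ‖x 0 - xstar‖ < ρmax)
    (dtil : ℕ → EuclideanSpace ℝ (Fin N))
    (hrec : ∀ k, x (k + 1) = P (x k - α • dtil k))
    (hdtil : ∀ k, ‖dtil k - d (x k)‖ ≤ κ) :
    Filter.limsup (fun k => ‖x k - xstar‖) Filter.atTop ≤ ρmin :=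
  gauss_newton_bounded_perturbation_convergence_general X hX g G hderiv σmin σmax ω hσ0 hσσ hω hlow
    hLip xstar hxstar hfix εmin hεmin d hd α hα1 hα0 T₁ T₂ hT₁ hT₂ κ hκ0 hκ ρmin ρmax hρmin hρmax P
    hPne hPfix x hxX h0 dtil hrec hdtil
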